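/- For a single guided mode n with real propagation constant k_n and frequency ω > 0, define ξᴱ_n = ∫ [conj(E_n) × H_n + E_n × conj(H_n)]_z and ξᴹ_n = ∫ [E_n ⊙ conj(D_n) + conj(E_n) ⊙ D_n + conj(H_n) ⊙ B_n + H_n ⊙ conj(B_n)]. Then both ξᴱ_n and ξᴹ_n are real and ξᴹ_n = (k_n/ω) ξᴱ_n. -/

import Mathlib

open MeasureTheory Complex Matrix

/-- Bilinear (unconjugated) dot product on ℂ³. -/
noncomputable def cdot (X Y : Fin 3 → ℂ) : ℂ := ∑ i, X i * Y i

/-- Cross product on ℂ³ (bilinear extension of the real one). -/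
noncomputable def ccross (X Y : Fin 3 → ℂ) : Fin 3 → ℂ :=
  ![X 1 * Y 2 - X 2 * Y 1, X 2 * Y 0 - X 0 * Y 2, X 0 * Y 1 - X 1 * Y 0]

/-- Partial derivative along coordinate `i` on ℝ³. -/
noncomputable def pd {E : Type*} [NormedAddCommGroup E] [NormedSpace ℝ E]
    (i : Fin 3) (f : (Fin 3 → ℝ) → E) (p : Fin 3 → ℝ) : E :=
  fderiv ℝ f p (Pi.single i 1)

/-- Divergence of a vector field on ℝ³. -/
noncomputable def div3 (F : (Fin 3 → ℝ) → Fin 3 → ℂ) (p : Fin 3 → ℝ) : ℂ :=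
  ∑ i, pd i (fun q => F q i) p

/-- Curl of a vector field on ℝ³. -/
noncomputable def curl3 (F : (Fin 3 → ℝ) → Fin 3 → ℂ) (p : Fin 3 → ℝ) : Fin 3 → ℂ :=
  ![pd 1 (fun q => F q 2) p - pd 2 (fun q => F q 1) p,
    pd 2 (fun q => F q 0) p - pd 0 (fun q => F q 2) p,
    pd 0 (fun q => F q 1) p - pd 1 (fun q => F q 0) p]

/-- Modal field from a transverse profile. -/
noncomputable def modal (P : ℝ × ℝ → Fin 3 → ℂ) (k : ℂ) : (Fin 3 → ℝ) → Fin 3 → ℂ :=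
  fun p i => P (p 0, p 1) i * Complex.exp (Complex.I * k * (p 2 : ℂ))

/-- Componentwise complex conjugation. -/
noncomputable def cconj (X : Fin 3 → ℂ) : Fin 3 → ℂ := fun i => (starRingEnd ℂ) (X i)

/-- The ⊙-product. -/
noncomputable def odot (X Y : Fin 3 → ℂ) : ℂ := (X 0 * Y 0 + X 1 * Y 1 - X 2 * Y 2) / 2

/-! ### Auxiliary lemmas -/

lemma comp_contDiff {P : ℝ × ℝ → Fin 3 → ℂ} (hP : ContDiff ℝ (⊤ : ℕ∞) P) (i : Fin 3) :
    ContDiff ℝ (⊤ : ℕ∞) (fun q => P q i) :=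
  (ContinuousLinearMap.proj (R := ℝ) (φ := fun _ : Fin 3 => ℂ) i).contDiff.comp hP

lemma comp_supp {P : ℝ × ℝ → Fin 3 → ℂ} (hP : HasCompactSupport P) (i : Fin 3) :
    HasCompactSupport (fun q => P q i) :=
  hP.comp_left (g := fun v : Fin 3 → ℂ => v i) rfl

lemma diffAt_conj {f : ℝ × ℝ → ℂ} {q : ℝ × ℝ} (hf : DifferentiableAt ℝ f q) :
    DifferentiableAt ℝ (fun r => (starRingEnd ℂ) (f r)) q :=
  (Complex.conjCLE.differentiableAt).comp q hf

lemma fderiv_conj {f : ℝ × ℝ → ℂ} {q : ℝ × ℝ} (hf : DifferentiableAt ℝ f q) (v : ℝ × ℝ) :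
    fderiv ℝ (fun r => (starRingEnd ℂ) (f r)) q v = (starRingEnd ℂ) (fderiv ℝ f q v) := by
  have h := (Complex.conjCLE.toContinuousLinearMap.hasFDerivAt (x := f q)).comp q hf.hasFDerivAt
  have : fderiv ℝ (fun r => (starRingEnd ℂ) (f r)) q
      = Complex.conjCLE.toContinuousLinearMap.comp (fderiv ℝ f q) := by
    exact h.fderiv
  rw [this]; simp

lemma fderiv_cm {a b : ℝ × ℝ → ℂ} {q : ℝ × ℝ} (ha : DifferentiableAt ℝ a q)
    (hb : DifferentiableAt ℝ b q) (v : ℝ × ℝ) :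
    fderiv ℝ (fun r => (starRingEnd ℂ) (a r) * b r) q v
      = (starRingEnd ℂ) (fderiv ℝ a q v) * b q
        + (starRingEnd ℂ) (a q) * fderiv ℝ b q v := by
  rw [fderiv_fun_mul (diffAt_conj ha) hb]
  simp [fderiv_conj ha v]
  ring

lemma pd_modal {P : ℝ × ℝ → Fin 3 → ℂ} (hP : ContDiff ℝ (⊤ : ℕ∞) P) (k : ℂ) (i : Fin 3)
    (q : ℝ × ℝ) (j : Fin 3) :
    pd j (fun p => modal P k p i) ![q.1, q.2, 0]
      = fderiv ℝ (fun r => P r i) q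
          (Pi.single (M := fun _ : Fin 3 => ℝ) j 1 0, Pi.single (M := fun _ : Fin 3 => ℝ) j 1 1)
        + P q i * (Complex.I * k * ((Pi.single (M := fun _ : Fin 3 => ℝ) j 1 2 : ℝ) : ℂ)) := by
  set p₀ : Fin 3 → ℝ := ![q.1, q.2, 0] with hp₀
  have hπ : (p₀ 0, p₀ 1) = q := by simp [hp₀]
  have hz : p₀ 2 = 0 := by simp [hp₀]
  set π : (Fin 3 → ℝ) →L[ℝ] ℝ × ℝ :=
    (ContinuousLinearMap.proj (R := ℝ) (φ := fun _ : Fin 3 => ℝ) 0).prod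
      (ContinuousLinearMap.proj 1) with hπdef
  set ζ : (Fin 3 → ℝ) →L[ℝ] ℝ := ContinuousLinearMap.proj 2 with hζdef
  have hfd : DifferentiableAt ℝ (fun r => P r i) q :=
    (ContinuousLinearMap.proj (R := ℝ) (φ := fun _ : Fin 3 => ℂ) i).differentiableAt.comp q
      ((hP.differentiable (by simp)) q)
  have h1 : HasFDerivAt (fun p : Fin 3 → ℝ => P (p 0, p 1) i)
      ((fderiv ℝ (fun r => P r i) q).comp π) p₀ := by
    have := hfd.hasFDerivAt.comp p₀ (π.hasFDerivAt (x := p₀))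
    exact this
  have h2 : HasFDerivAt (fun p : Fin 3 → ℝ => Complex.I * k * ((p 2 : ℝ) : ℂ))
      ((Complex.I * k) • (Complex.ofRealCLM.comp ζ)) p₀ :=
    ((Complex.ofRealCLM.comp ζ).hasFDerivAt (x := p₀)).const_mul (Complex.I * k)
  have h3 := h2.cexp
  have h4 := h1.mul h3
  have : pd j (fun p => modal P k p i) p₀
      = (P (p₀ 0, p₀ 1) i • (Complex.exp (Complex.I * k * ((p₀ 2 : ℝ):ℂ)) •
          ((Complex.I * k) • (Complex.ofRealCLM.comp ζ)))
        + Complex.exp (Complex.I * k * ((p₀ 2 : ℝ):ℂ)) •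
          ((fderiv ℝ (fun r => P r i) q).comp π)) (Pi.single j 1) := by
    rw [pd]
    congr 1
    exact h4.fderiv
  rw [this]
  simp [hπ, hz, hπdef, hζdef, ContinuousLinearMap.proj_apply, smul_eq_mul]
  ring_nf

lemma pd_modal0 {P : ℝ × ℝ → Fin 3 → ℂ} (hP : ContDiff ℝ (⊤ : ℕ∞) P) (k : ℂ) (i : Fin 3)
    (q : ℝ × ℝ) :
    pd 0 (fun p => modal P k p i) ![q.1, q.2, 0]
      = fderiv ℝ (fun r => P r i) q (1, 0) := by
  have := pd_modal hP k i q 0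
  simpa [Pi.single_apply] using this

lemma pd_modal1 {P : ℝ × ℝ → Fin 3 → ℂ} (hP : ContDiff ℝ (⊤ : ℕ∞) P) (k : ℂ) (i : Fin 3)
    (q : ℝ × ℝ) :
    pd 1 (fun p => modal P k p i) ![q.1, q.2, 0]
      = fderiv ℝ (fun r => P r i) q (0, 1) := by
  have := pd_modal hP k i q 1
  simpa [Pi.single_apply] using this

lemma pd_modal2 {P : ℝ × ℝ → Fin 3 → ℂ} (hP : ContDiff ℝ (⊤ : ℕ∞) P) (k : ℂ) (i : Fin 3)
    (q : ℝ × ℝ) :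
    pd 2 (fun p => modal P k p i) ![q.1, q.2, 0] = Complex.I * k * P q i := by
  have := pd_modal hP k i q 2
  simp [Pi.single_apply] at this
  rw [this]; simp only [Prod.mk_zero_zero, map_zero]; ring

lemma curl_eqs {P Q : ℝ × ℝ → Fin 3 → ℂ} (hP : ContDiff ℝ (⊤ : ℕ∞) P) (k c : ℂ)
    (h : ∀ p, curl3 (modal P k) p = fun i => c * modal Q k p i) (q : ℝ × ℝ) :
    (fderiv ℝ (fun r => P r 2) q (0, 1) - Complex.I * k * P q 1 = c * Q q 0) ∧
    (Complex.I * k * P q 0 - fderiv ℝ (fun r => P r 2) q (1, 0) = c * Q q 1) ∧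
    (fderiv ℝ (fun r => P r 1) q (1, 0) - fderiv ℝ (fun r => P r 0) q (0, 1) = c * Q q 2) := by
  have h0 := congrFun (h ![q.1, q.2, 0]) 0
  have h1 := congrFun (h ![q.1, q.2, 0]) 1
  have h2 := congrFun (h ![q.1, q.2, 0]) 2
  simp only [curl3, Matrix.cons_val_zero, Matrix.cons_val_one, Matrix.head_cons,
    Matrix.cons_val_two, Matrix.tail_cons] at h0 h1 h2
  rw [pd_modal1 hP, pd_modal2 hP] at h0
  rw [pd_modal2 hP, pd_modal0 hP] at h1
  rw [pd_modal0 hP, pd_modal1 hP] at h2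
  simp only [modal] at h0 h1 h2
  refine ⟨?_, ?_, ?_⟩
  · simpa using h0
  · simpa using h1
  · simpa using h2

lemma integral_fderiv_dir_zero (g : ℝ × ℝ → ℂ) (hg : ContDiff ℝ (⊤ : ℕ∞) g)
    (hcs : HasCompactSupport g) (v : ℝ × ℝ) :
    ∫ q : ℝ × ℝ, fderiv ℝ g q v = 0 := by
  have hint : Integrable (fun q : ℝ × ℝ => fderiv ℝ g q v) := by
    have hc : Continuous (fun q : ℝ × ℝ => fderiv ℝ g q v) :=
      (hg.continuous_fderiv (by simp)).clm_apply continuous_const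
    exact hc.integrable_of_hasCompactSupport
      ((hcs.fderiv (𝕜 := ℝ)).comp_left (g := fun L : (ℝ × ℝ) →L[ℝ] ℂ => L v) rfl)
  have h := integral_mul_fderiv_eq_neg_fderiv_mul_of_integrable
      (μ := volume) (f := fun _ : ℝ × ℝ => (1 : ℂ)) (g := g) (v := v)
      ?_ ?_ ?_ ?_ ?_
  · simpa using h
  · have : (fun x : ℝ × ℝ => fderiv ℝ (fun _ : ℝ × ℝ => (1 : ℂ)) x v * g x) = fun _ => 0 := by
      funext x; simp
    rw [this]
    exact integrable_zero (ℝ × ℝ) ℂ volume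
  · simpa using hint
  · simpa using hg.continuous.integrable_of_hasCompactSupport hcs
  · exact fun x _ => differentiableAt_const _
  · exact fun x _ => hg.differentiable (by simp) x

lemma fderiv_four (a1 b1 a2 b2 a3 b3 a4 b4 : ℝ × ℝ → ℂ) (q v : ℝ × ℝ)
    (h1 : DifferentiableAt ℝ a1 q) (hb1 : DifferentiableAt ℝ b1 q)
    (h2 : DifferentiableAt ℝ a2 q) (hb2 : DifferentiableAt ℝ b2 q)
    (h3 : DifferentiableAt ℝ a3 q) (hb3 : DifferentiableAt ℝ b3 q)
    (h4 : DifferentiableAt ℝ a4 q) (hb4 : DifferentiableAt ℝ b4 q) :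
    fderiv ℝ (fun r => (starRingEnd ℂ) (a1 r) * b1 r + (starRingEnd ℂ) (a2 r) * b2 r
        - (starRingEnd ℂ) (a3 r) * b3 r - (starRingEnd ℂ) (a4 r) * b4 r) q v
      = ((starRingEnd ℂ) (fderiv ℝ a1 q v) * b1 q + (starRingEnd ℂ) (a1 q) * fderiv ℝ b1 q v)
        + ((starRingEnd ℂ) (fderiv ℝ a2 q v) * b2 q + (starRingEnd ℂ) (a2 q) * fderiv ℝ b2 q v)
        - ((starRingEnd ℂ) (fderiv ℝ a3 q v) * b3 q + (starRingEnd ℂ) (a3 q) * fderiv ℝ b3 q v)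
        - ((starRingEnd ℂ) (fderiv ℝ a4 q v) * b4 q + (starRingEnd ℂ) (a4 q) * fderiv ℝ b4 q v) := by
  have d1 : DifferentiableAt ℝ (fun r => (starRingEnd ℂ) (a1 r) * b1 r) q := (diffAt_conj h1).mul hb1
  have d2 : DifferentiableAt ℝ (fun r => (starRingEnd ℂ) (a2 r) * b2 r) q := (diffAt_conj h2).mul hb2
  have d3 : DifferentiableAt ℝ (fun r => (starRingEnd ℂ) (a3 r) * b3 r) q := (diffAt_conj h3).mul hb3
  have d4 : DifferentiableAt ℝ (fun r => (starRingEnd ℂ) (a4 r) * b4 r) q := (diffAt_conj h4).mul hb4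
  rw [fderiv_fun_sub ((d1.fun_add d2).fun_sub d3) d4, fderiv_fun_sub (d1.fun_add d2) d3, fderiv_fun_add d1 d2]
  simp only [ContinuousLinearMap.sub_apply, ContinuousLinearMap.add_apply]
  rw [fderiv_cm h1 hb1 v, fderiv_cm h2 hb2 v, fderiv_cm h3 hb3 v, fderiv_cm h4 hb4 v]

lemma integrable_fderiv_dir (g : ℝ × ℝ → ℂ) (hg : ContDiff ℝ (⊤ : ℕ∞) g)
    (hcs : HasCompactSupport g) (v : ℝ × ℝ) :
    Integrable (fun q : ℝ × ℝ => fderiv ℝ g q v) := by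
  have hc : Continuous (fun q : ℝ × ℝ => fderiv ℝ g q v) :=
    (hg.continuous_fderiv (by simp)).clm_apply continuous_const
  exact hc.integrable_of_hasCompactSupport
    ((hcs.fderiv (𝕜 := ℝ)).comp_left (g := fun L : (ℝ × ℝ) →L[ℝ] ℂ => L v) rfl)

/-- for a single guided mode with real propagation constant `kn` and `ω > 0`,
the energy normalization `ξᴱ` and momentum normalization `ξᴹ` are both real, and
`ξᴹ = (kn/ω) ξᴱ`. -/
theorem xiM_eq_k_over_omega_xiE
    (En Hn Dn Bn : ℝ × ℝ → Fin 3 → ℂ)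
    (kn ω ε₀ μ₀ : ℝ)
    (ε : ℝ × ℝ → Matrix (Fin 3) (Fin 3) ℂ)
    (hεH : ∀ q, (ε q)ᴴ = ε q)
    (hω : 0 < ω) (hε₀ : 0 < ε₀) (hμ₀ : 0 < μ₀)
    (hEn : ContDiff ℝ (⊤ : ℕ∞) En ∧ HasCompactSupport En)
    (hHn : ContDiff ℝ (⊤ : ℕ∞) Hn ∧ HasCompactSupport Hn)
    (hDn : ContDiff ℝ (⊤ : ℕ∞) Dn ∧ HasCompactSupport Dn)
    (hBn : ContDiff ℝ (⊤ : ℕ∞) Bn ∧ HasCompactSupport Bn)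
    (hmatDn : ∀ q, Dn q = (ε₀ : ℂ) • (ε q).mulVec (En q))
    (hmatBn : ∀ q, Bn q = (μ₀ : ℂ) • Hn q)
    (hcurlEn : ∀ p, curl3 (modal En (kn : ℂ)) p = fun i => Complex.I * ω * modal Bn (kn : ℂ) p i)
    (hcurlHn : ∀ p, curl3 (modal Hn (kn : ℂ)) p = fun i => -(Complex.I * ω) * modal Dn (kn : ℂ) p i)
    (hdivDn : ∀ p, div3 (modal Dn (kn : ℂ)) p = 0)
    (hdivBn : ∀ p, div3 (modal Bn (kn : ℂ)) p = 0) :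
    (∫ q : ℝ × ℝ, (ccross (cconj (En q)) (Hn q) 2 + ccross (En q) (cconj (Hn q)) 2)).im = 0
    ∧ (∫ q : ℝ × ℝ,
        (odot (En q) (cconj (Dn q)) + odot (cconj (En q)) (Dn q)
          + odot (cconj (Hn q)) (Bn q) + odot (Hn q) (cconj (Bn q)))).im = 0
    ∧ (∫ q : ℝ × ℝ,
        (odot (En q) (cconj (Dn q)) + odot (cconj (En q)) (Dn q)
          + odot (cconj (Hn q)) (Bn q) + odot (Hn q) (cconj (Bn q))))
      = ((kn / ω : ℝ) : ℂ)
        * ∫ q : ℝ × ℝ, (ccross (cconj (En q)) (Hn q) 2 + ccross (En q) (cconj (Hn q)) 2) := by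
  obtain ⟨hEs, hEc⟩ := hEn
  obtain ⟨hHs, hHc⟩ := hHn
  have real_of : ∀ f : ℝ × ℝ → ℂ, (∀ q, (starRingEnd ℂ) (f q) = f q) → (∫ q, f q).im = 0 := by
    intro f hf
    have h : ∫ q : ℝ × ℝ, (starRingEnd ℂ) (f q) = (starRingEnd ℂ) (∫ q : ℝ × ℝ, f q) :=
      integral_conj
    simp_rw [hf] at h
    exact Complex.conj_eq_iff_im.mp h.symm
  have hs1 : ∀ q : ℝ × ℝ, (starRingEnd ℂ)
      (ccross (cconj (En q)) (Hn q) 2 + ccross (En q) (cconj (Hn q)) 2)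
      = ccross (cconj (En q)) (Hn q) 2 + ccross (En q) (cconj (Hn q)) 2 := by
    intro q
    simp [ccross, cconj, map_add, map_sub, _root_.map_mul, Complex.conj_conj]
    ring
  have hs2 : ∀ q : ℝ × ℝ, (starRingEnd ℂ)
      (odot (En q) (cconj (Dn q)) + odot (cconj (En q)) (Dn q)
        + odot (cconj (Hn q)) (Bn q) + odot (Hn q) (cconj (Bn q)))
      = odot (En q) (cconj (Dn q)) + odot (cconj (En q)) (Dn q)
        + odot (cconj (Hn q)) (Bn q) + odot (Hn q) (cconj (Bn q)) := by
    intro q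
    simp [odot, cconj, map_add, map_sub, _root_.map_mul, map_div₀, map_ofNat, Complex.conj_conj]
    ring
  refine ⟨real_of _ hs1, real_of _ hs2, ?_⟩
  -- differentiability of components
  have dE : ∀ (i : Fin 3) (q : ℝ × ℝ), DifferentiableAt ℝ (fun r => En r i) q :=
    fun i q => ((comp_contDiff hEs i).differentiable (by simp)) q
  have dH : ∀ (i : Fin 3) (q : ℝ × ℝ), DifferentiableAt ℝ (fun r => Hn r i) q :=
    fun i q => ((comp_contDiff hHs i).differentiable (by simp)) q
  have hconjE : ∀ i : Fin 3, ContDiff ℝ (⊤ : ℕ∞) (fun r => (starRingEnd ℂ) (En r i)) :=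
    fun i => Complex.conjCLE.toContinuousLinearMap.contDiff.comp (comp_contDiff hEs i)
  have hconjH : ∀ i : Fin 3, ContDiff ℝ (⊤ : ℕ∞) (fun r => (starRingEnd ℂ) (Hn r i)) :=
    fun i => Complex.conjCLE.toContinuousLinearMap.contDiff.comp (comp_contDiff hHs i)
  -- hatted curl equations
  have cE := fun q => curl_eqs hEs (kn : ℂ) (Complex.I * (ω : ℂ)) hcurlEn q
  have cH := fun q => curl_eqs hHs (kn : ℂ) (-(Complex.I * (ω : ℂ))) hcurlHn q
  -- auxiliary transverse fields
  set Ffun : ℝ × ℝ → ℂ := fun r =>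
    (starRingEnd ℂ) (En r 1) * Hn r 2 + (starRingEnd ℂ) (En r 2) * Hn r 1
      - (starRingEnd ℂ) (Hn r 1) * En r 2 - (starRingEnd ℂ) (Hn r 2) * En r 1 with hFdef
  set Gfun : ℝ × ℝ → ℂ := fun r =>
    (starRingEnd ℂ) (Hn r 0) * En r 2 + (starRingEnd ℂ) (Hn r 2) * En r 0
      - (starRingEnd ℂ) (En r 0) * Hn r 2 - (starRingEnd ℂ) (En r 2) * Hn r 0 with hGdef
  have hFs : ContDiff ℝ (⊤ : ℕ∞) Ffun :=
    ((((hconjE 1).mul (comp_contDiff hHs 2)).add ((hconjE 2).mul (comp_contDiff hHs 1))).sub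
      ((hconjH 1).mul (comp_contDiff hEs 2))).sub ((hconjH 2).mul (comp_contDiff hEs 1))
  have hGs : ContDiff ℝ (⊤ : ℕ∞) Gfun :=
    ((((hconjH 0).mul (comp_contDiff hEs 2)).add ((hconjH 2).mul (comp_contDiff hEs 0))).sub
      ((hconjE 0).mul (comp_contDiff hHs 2))).sub ((hconjE 2).mul (comp_contDiff hHs 0))
  have hFc : HasCompactSupport Ffun := by
    apply HasCompactSupport.intro hHc
    intro x hx
    have h0 : Hn x = 0 := image_eq_zero_of_notMem_tsupport hx
    simp [hFdef, h0]
  have hGc : HasCompactSupport Gfun := by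
    apply HasCompactSupport.intro hHc
    intro x hx
    have h0 : Hn x = 0 := image_eq_zero_of_notMem_tsupport hx
    simp [hGdef, h0]
  have hDF0 := integral_fderiv_dir_zero Ffun hFs hFc (1, 0)
  have hDG0 := integral_fderiv_dir_zero Gfun hGs hGc (0, 1)
  have hDFint := integrable_fderiv_dir Ffun hFs hFc (1, 0)
  have hDGint := integrable_fderiv_dir Gfun hGs hGc (0, 1)
  -- integrability of the Poynting-type integrand
  have hSexp : (fun q : ℝ × ℝ => ccross (cconj (En q)) (Hn q) 2 + ccross (En q) (cconj (Hn q)) 2)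
      = fun q => ((starRingEnd ℂ) (En q 0) * Hn q 1 - (starRingEnd ℂ) (En q 1) * Hn q 0)
        + (En q 0 * (starRingEnd ℂ) (Hn q 1) - En q 1 * (starRingEnd ℂ) (Hn q 0)) := by
    funext q
    simp [ccross, cconj]
  have hScont : Continuous (fun q : ℝ × ℝ =>
      ccross (cconj (En q)) (Hn q) 2 + ccross (En q) (cconj (Hn q)) 2) := by
    rw [hSexp]
    exact ((((hconjE 0).continuous.mul (comp_contDiff hHs 1).continuous).sub
      ((hconjE 1).continuous.mul (comp_contDiff hHs 0).continuous)).add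
      (((comp_contDiff hEs 0).continuous.mul (hconjH 1).continuous).sub
      ((comp_contDiff hEs 1).continuous.mul (hconjH 0).continuous)))
  have hScs : HasCompactSupport (fun q : ℝ × ℝ =>
      ccross (cconj (En q)) (Hn q) 2 + ccross (En q) (cconj (Hn q)) 2) := by
    apply HasCompactSupport.intro hHc
    intro x hx
    have h0 : Hn x = 0 := image_eq_zero_of_notMem_tsupport hx
    simp [ccross, cconj, h0]
  have hSint : Integrable (fun q : ℝ × ℝ =>
      ccross (cconj (En q)) (Hn q) 2 + ccross (En q) (cconj (Hn q)) 2) :=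
    hScont.integrable_of_hasCompactSupport hScs
  -- the key pointwise identity
  have key : ∀ q : ℝ × ℝ,
      Complex.I * (ω : ℂ) * (odot (En q) (cconj (Dn q)) + odot (cconj (En q)) (Dn q)
          + odot (cconj (Hn q)) (Bn q) + odot (Hn q) (cconj (Bn q)))
        = Complex.I * (kn : ℂ) * (ccross (cconj (En q)) (Hn q) 2
            + ccross (En q) (cconj (Hn q)) 2)
          + (fderiv ℝ Ffun q (1, 0) + fderiv ℝ Gfun q (0, 1)) / 2 := by
    intro q
    obtain ⟨eq0, eq1, eq2⟩ := cE q
    obtain ⟨hq0, hq1, hq2⟩ := cH q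
    have eq0c := congrArg (starRingEnd ℂ) eq0
    have eq1c := congrArg (starRingEnd ℂ) eq1
    have eq2c := congrArg (starRingEnd ℂ) eq2
    have hq0c := congrArg (starRingEnd ℂ) hq0
    have hq1c := congrArg (starRingEnd ℂ) hq1
    have hq2c := congrArg (starRingEnd ℂ) hq2
    simp only [map_sub, map_add, _root_.map_mul, map_neg, Complex.conj_I, Complex.conj_ofReal]
      at eq0c eq1c eq2c hq0c hq1c hq2c
    have hDF := fderiv_four (fun r => En r 1) (fun r => Hn r 2) (fun r => En r 2)
      (fun r => Hn r 1) (fun r => Hn r 1) (fun r => En r 2) (fun r => Hn r 2) (fun r => En r 1)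
      q (1, 0) (dE 1 q) (dH 2 q) (dE 2 q) (dH 1 q) (dH 1 q) (dE 2 q) (dH 2 q) (dE 1 q)
    have hDG := fderiv_four (fun r => Hn r 0) (fun r => En r 2) (fun r => Hn r 2)
      (fun r => En r 0) (fun r => En r 0) (fun r => Hn r 2) (fun r => En r 2) (fun r => Hn r 0)
      q (0, 1) (dH 0 q) (dE 2 q) (dH 2 q) (dE 0 q) (dE 0 q) (dH 2 q) (dE 2 q) (dH 0 q)
    rw [hFdef, hGdef, hDF, hDG]
    simp only [odot, cconj, ccross, Matrix.cons_val_zero, Matrix.cons_val_one, Matrix.head_cons,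
      Matrix.cons_val_two, Matrix.tail_cons]
    linear_combination
      ((starRingEnd ℂ) (En q 0) / 2) * hq0 + ((starRingEnd ℂ) (En q 1) / 2) * hq1
      + (-((starRingEnd ℂ) (En q 2)) / 2) * hq2
      + (-((starRingEnd ℂ) (Hn q 0)) / 2) * eq0 + (-((starRingEnd ℂ) (Hn q 1)) / 2) * eq1
      + ((starRingEnd ℂ) (Hn q 2) / 2) * eq2
      + (-(En q 0) / 2) * hq0c + (-(En q 1) / 2) * hq1c + (En q 2 / 2) * hq2c
      + (Hn q 0 / 2) * eq0c + (Hn q 1 / 2) * eq1c + (-(Hn q 2) / 2) * eq2c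
  -- integrate the key identity
  have hIsplit : Complex.I * (ω : ℂ) * ∫ q : ℝ × ℝ,
      (odot (En q) (cconj (Dn q)) + odot (cconj (En q)) (Dn q)
        + odot (cconj (Hn q)) (Bn q) + odot (Hn q) (cconj (Bn q)))
      = Complex.I * (kn : ℂ) * ∫ q : ℝ × ℝ,
        (ccross (cconj (En q)) (Hn q) 2 + ccross (En q) (cconj (Hn q)) 2) := by
    have int1 : Integrable (fun a : ℝ × ℝ => Complex.I * (kn : ℂ)
        * (ccross (cconj (En a)) (Hn a) 2 + ccross (En a) (cconj (Hn a)) 2)) volume :=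
      hSint.const_mul _
    have int2 : Integrable (fun a : ℝ × ℝ =>
        (fderiv ℝ Ffun a (1, 0) + fderiv ℝ Gfun a (0, 1)) / 2) volume :=
      (hDFint.add hDGint).div_const 2
    rw [← integral_const_mul]
    rw [integral_congr_ae (ae_of_all _ key)]
    rw [integral_add int1 int2]
    rw [integral_div, integral_add hDFint hDGint, hDF0, hDG0, integral_const_mul]
    simp
  have hred : (ω : ℂ) * ∫ q : ℝ × ℝ,
      (odot (En q) (cconj (Dn q)) + odot (cconj (En q)) (Dn q)
        + odot (cconj (Hn q)) (Bn q) + odot (Hn q) (cconj (Bn q)))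
      = (kn : ℂ) * ∫ q : ℝ × ℝ,
        (ccross (cconj (En q)) (Hn q) 2 + ccross (En q) (cconj (Hn q)) 2) := by
    rw [mul_assoc, mul_assoc] at hIsplit
    exact mul_left_cancel₀ Complex.I_ne_zero hIsplit
  have hwne : (ω : ℂ) ≠ 0 := Complex.ofReal_ne_zero.mpr hω.ne'
  rw [show ((kn / ω : ℝ) : ℂ) = (kn : ℂ) / (ω : ℂ) by push_cast; ring]
  field_simp
  linear_combination hred
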